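/- There exists a packing of $K_{3(4)}$ by nine edge-disjoint copies of $K_4-e$ whose leave is a triangle. -/

import Mathlib

open SimpleGraph Finset

/-- `K₄ - e`: the complete graph on `{0,1,2,3}` minus the edge `{2,3}`.
In the block notation `[a,b,c-d]`, `a = 0`, `b = 1`, `c = 2`, `d = 3`. -/
def K4e : SimpleGraph (Fin 4) where
  Adj x y := x ≠ y ∧ ¬(x = 2 ∧ y = 3) ∧ ¬(x = 3 ∧ y = 2)
  symm := by
    constructor
    intro x y h
    exact ⟨h.1.symm, fun hc => h.2.2 ⟨hc.2, hc.1⟩, fun hc => h.2.1 ⟨hc.2, hc.1⟩⟩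
  loopless := ⟨fun x h => h.1 rfl⟩

instance : DecidableRel K4e.Adj :=
  fun x y => inferInstanceAs (Decidable (x ≠ y ∧ ¬(x = 2 ∧ y = 3) ∧ ¬(x = 3 ∧ y = 2)))

/-- The edge set of the copy of `K₄ - e` with vertices `f 0, f 1, f 2, f 3`. -/
def copyEdges {V : Type*} (f : Fin 4 → V) : Set (Sym2 V) :=
  Sym2.map f '' K4e.edgeSet

/-- `B` is a packing of `H` by edge-disjoint copies of `K₄ - e`. -/
def IsK4ePacking {V : Type*} (H : SimpleGraph V) (B : Finset (Fin 4 → V)) : Prop :=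
  (∀ f ∈ B, Function.Injective f) ∧
  (∀ f ∈ B, copyEdges f ⊆ H.edgeSet) ∧
  (∀ f ∈ B, ∀ g ∈ B, f ≠ g → Disjoint (copyEdges f) (copyEdges g))

/-- The leave of a packing: the edges of `H` covered by no copy. -/
def leave {V : Type*} (H : SimpleGraph V) (B : Finset (Fin 4 → V)) : Set (Sym2 V) :=
  H.edgeSet \ ⋃ f ∈ B, copyEdges f

/-- `B` is a decomposition of `H` into edge-disjoint copies of `K₄ - e`. -/
def IsK4eDecomp {V : Type*} (H : SimpleGraph V) (B : Finset (Fin 4 → V)) : Prop :=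
  IsK4ePacking H B ∧ ∀ e ∈ H.edgeSet, ∃ f ∈ B, e ∈ copyEdges f

/-- The complete tripartite graph with parts `{i, i+3, i+6, i+9}`, `0 ≤ i ≤ 2`, on `Fin 12`. -/
def K3x4 : SimpleGraph (Fin 12) where
  Adj x y := x.val % 3 ≠ y.val % 3
  symm := ⟨fun _ _ h => h.symm⟩
  loopless := ⟨fun _ h => h rfl⟩

instance : DecidableRel K3x4.Adj := fun x y => inferInstanceAs (Decidable (x.val % 3 ≠ y.val % 3))

section

variable {V : Type*}

theorem mem_copyEdges {f : Fin 4 → V} {e : Sym2 V} :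
    e ∈ copyEdges f ↔ ∃ i j, K4e.Adj i j ∧ s(f i, f j) = e := by
  simp [copyEdges, Sym2.exists]

theorem copyEdges_subset_edgeSet_iff {H : SimpleGraph V} {f : Fin 4 → V} :
    copyEdges f ⊆ H.edgeSet ↔ ∀ i j, K4e.Adj i j → H.Adj (f i) (f j) := by
  refine ⟨fun h i j hij => h (mem_copyEdges.2 ⟨i, j, hij, rfl⟩), ?_⟩
  rintro h _ hmem
  obtain ⟨i, j, hij, rfl⟩ := mem_copyEdges.1 hmem
  exact h i j hij

theorem disjoint_copyEdges_iff {f g : Fin 4 → V} :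
    Disjoint (copyEdges f) (copyEdges g) ↔
      ∀ i j k l, K4e.Adj i j → K4e.Adj k l → s(f i, f j) ≠ s(g k, g l) := by
  simp only [Set.disjoint_left, mem_copyEdges]
  grind

theorem mk_mem_leave_iff {H : SimpleGraph V} {B : Finset (Fin 4 → V)} {u v : V} :
    s(u, v) ∈ leave H B ↔ H.Adj u v ∧ ∀ f ∈ B, ∀ i j, K4e.Adj i j → s(f i, f j) ≠ s(u, v) := by
  simp [leave, mem_copyEdges]

end

def packingBlocks : List (Fin 4 → Fin 12) :=
  [![4, 5, 0, 6], ![3, 4, 2, 8], ![6, 7, 2, 11], ![7, 8, 0, 9], ![3, 5, 1, 7],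
   ![10, 11, 0, 3], ![9, 11, 1, 4], ![9, 10, 2, 5], ![6, 8, 1, 10]]

-- `decide` evaluates `List.all` quickly but times out on the `Decidable` instance of
-- `∀ f ∈ l, _`, so the finite checks below are phrased with `List.all`.
theorem isK4ePacking_packingBlocks : IsK4ePacking K3x4 packingBlocks.toFinset := by
  have hinj : ∀ f ∈ packingBlocks, Function.Injective f :=
    List.all_iff_forall_prop.1 (by decide)
  have hsub : ∀ f ∈ packingBlocks, ∀ i j, K4e.Adj i j → K3x4.Adj (f i) (f j) :=
    List.all_iff_forall_prop.1 (by decide)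
  have hdisj : (packingBlocks.all fun f => packingBlocks.all fun g => decide (f ≠ g →
      ∀ i j k l, K4e.Adj i j → K4e.Adj k l → s(f i, f j) ≠ s(g k, g l))) = true := by
    decide
  simp only [IsK4ePacking, List.mem_toFinset, copyEdges_subset_edgeSet_iff,
    disjoint_copyEdges_iff]
  exact ⟨hinj, hsub,
    fun f hf g hg => of_decide_eq_true (List.all_eq_true.1 (List.all_eq_true.1 hdisj f hf) g hg)⟩

theorem leave_packingBlocks :
    leave K3x4 packingBlocks.toFinset = {s(0, 1), s(1, 2), s(0, 2)} := by
  have hcheck : ∀ u v : Fin 12, (K3x4.Adj u v ∧ (packingBlocks.all fun f =>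
      decide (∀ i j, K4e.Adj i j → s(f i, f j) ≠ s(u, v))) = true) ↔
      (s(u, v) = s(0, 1) ∨ s(u, v) = s(1, 2) ∨ s(u, v) = s(0, 2)) := by
    decide
  ext e
  induction e using Sym2.ind with
  | h u v => simpa [mk_mem_leave_iff, List.all_iff_forall_prop] using hcheck u v

theorem stmt12 :
    ∃ B : Finset (Fin 4 → Fin 12), B.card = 9 ∧ IsK4ePacking K3x4 B ∧
      ∃ x y z : Fin 12, x ≠ y ∧ y ≠ z ∧ x ≠ z ∧
        leave K3x4 B = {s(x, y), s(y, z), s(x, z)} :=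
  ⟨packingBlocks.toFinset, by decide, isK4ePacking_packingBlocks, 0, 1, 2,
    by decide, by decide, by decide, leave_packingBlocks⟩
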